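/- arXiv:1110.4796 — 2 statements merged into one kernel-verified Lean document; each statement's English description precedes it below -/
import Mathlib

section
/- Let K be a closed connected set with H¹(K ∩ B(x₀,3r)) ≤ (11/10)·(3r), let y, z ∈ K ∩ ∂B(x₀,r), and let Γ ⊆ K be a geodesic curve in K connecting y and z. Then Γ ⊆ B(x₀,3r). Consequently H¹(Γ) ≤ H¹(K ∩ B(x₀,3r)) ≤ 4r. -/
open MeasureTheory Metric Set
open scoped ENNReal

/-!
Suppose `Γ` leaves `B(x₀, 3r)`, and cut it at radius `ρ = 14r/5`. By boundary bumping, the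
components of `y` and `z` in `Γ ∩ B̄(x₀, ρ)` reach the sphere of radius `ρ`; as `dist · x₀` is
1-Lipschitz, each has `H¹ ≥ ρ - r`. If the two components coincide, this component is a
compact connected competitor joining `y` and `z` that misses the part of `Γ` beyond radius `ρ`,
which has positive length: this contradicts minimality. Otherwise they are disjoint subsets of
`K ∩ B(x₀, 3r)` of total length at least `18r/5 > 33r/10`, contradicting the density bound.
-/

section Topology

variable {X : Type*} [TopologicalSpace X]

theorem isClosed_connectedComponentIn {F : Set X} (hF : IsClosed F) (x : X) :
    IsClosed (connectedComponentIn F x) := by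
  refine closure_subset_iff_isClosed.mp fun p hp ↦ ?_
  by_cases hx : x ∈ F
  · refine isPreconnected_connectedComponentIn.closure.subset_connectedComponentIn
      (subset_closure (mem_connectedComponentIn hx)) ?_ hp
    exact closure_minimal (connectedComponentIn_subset F x) hF
  · simp [connectedComponentIn_eq_empty hx] at hp

theorem IsCompact.isCompact_connectedComponentIn [T2Space X] {F : Set X} (hF : IsCompact F)
    (x : X) : IsCompact (connectedComponentIn F x) :=
  hF.of_isClosed_subset (isClosed_connectedComponentIn hF.isClosed x)
    (connectedComponentIn_subset F x)

theorem exists_isClopen_mem_disjoint_of_disjoint_connectedComponent [CompactSpace X] [T2Space X]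
    {x : X} {B : Set X} (hB : IsClosed B) (h : Disjoint (connectedComponent x) B) :
    ∃ U, IsClopen U ∧ x ∈ U ∧ Disjoint U B := by
  rw [connectedComponent_eq_iInter_isClopen, disjoint_iff_inter_eq_empty, inter_comm] at h
  obtain ⟨t, ht⟩ := hB.isCompact.elim_finite_subfamily_closed _ (fun s ↦ s.2.1.1) h
  refine ⟨⋂ s ∈ t, s.1, isClopen_biInter_finset fun s _ ↦ s.2.1, mem_iInter₂.2 fun s _ ↦ s.2.2, ?_⟩
  rwa [disjoint_iff_inter_eq_empty, inter_comm]

/-- The boundary bumping theorem. -/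
theorem IsClosed.connectedComponentIn_inter_frontier_nonempty [CompactSpace X] [T2Space X]
    [ConnectedSpace X] {F : Set X} (hF : IsClosed F) (hFne : F ≠ univ) {a : X} (ha : a ∈ F) :
    (connectedComponentIn F a ∩ frontier F).Nonempty := by
  rw [← not_disjoint_iff_nonempty_inter]
  intro hdisj
  have : CompactSpace F := isCompact_iff_compactSpace.mp hF.isCompact
  rw [connectedComponentIn_eq_image ha, disjoint_image_left] at hdisj
  obtain ⟨U, hU, haU, hUB⟩ := exists_isClopen_mem_disjoint_of_disjoint_connectedComponent
    (isClosed_frontier.preimage continuous_subtype_val) hdisj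
  obtain ⟨V, hV, hVU⟩ := isOpen_induced_iff.mp hU.2
  have hUint : (↑) '' U = V ∩ interior F := by
    ext p
    constructor
    · rintro ⟨q, hq, rfl⟩
      refine ⟨by rwa [← hVU] at hq, ?_⟩
      by_contra hint
      exact hUB.ne_of_mem hq (by rw [hF.frontier_eq]; exact ⟨q.2, hint⟩) rfl
    · rintro ⟨hpV, hpint⟩
      exact ⟨⟨p, interior_subset hpint⟩, by rwa [← hVU], rfl⟩
  have hU' : IsClopen (((↑) : F → X) '' U) :=
    ⟨hF.isClosedMap_subtype_val _ hU.1, hUint ▸ hV.inter isOpen_interior⟩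
  refine hFne (eq_univ_of_univ_subset ?_)
  rw [← hU'.eq_univ ⟨a, _, haU, rfl⟩]
  exact image_subset_iff.2 fun q _ ↦ q.2

theorem IsCompact.connectedComponentIn_inter_frontier_nonempty [T2Space X] {Γ F : Set X}
    (hΓ : IsCompact Γ) (hΓconn : IsConnected Γ) (hF : IsClosed F) (hΓF : ¬ Γ ⊆ F) {a : X}
    (ha : a ∈ Γ ∩ F) : (connectedComponentIn (Γ ∩ F) a ∩ frontier F).Nonempty := by
  have : CompactSpace Γ := isCompact_iff_compactSpace.mp hΓ
  have : ConnectedSpace Γ := Subtype.connectedSpace hΓconn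
  have hFne : ((↑) ⁻¹' F : Set Γ) ≠ univ := by simpa [eq_univ_iff_forall, subset_def] using hΓF
  obtain ⟨b, hb, hbF⟩ :=
    (hF.preimage continuous_subtype_val).connectedComponentIn_inter_frontier_nonempty
      hFne (a := ⟨a, ha.1⟩) ha.2
  refine ⟨b, ?_, continuous_subtype_val.frontier_preimage_subset F hbF⟩
  have := continuous_subtype_val.continuousOn.image_connectedComponentIn_subset
    (s := (↑) ⁻¹' F) (a := ⟨a, ha.1⟩) ha.2
  rw [Subtype.image_preimage_coe] at this
  exact this (mem_image_of_mem _ hb)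

theorem connectedComponentIn_disjoint {F : Set X} {x y : X} (h : y ∉ connectedComponentIn F x) :
    Disjoint (connectedComponentIn F x) (connectedComponentIn F y) := by
  rw [disjoint_left]
  intro p hpx hpy
  rw [connectedComponentIn_eq hpx, ← connectedComponentIn_eq hpy] at h
  exact h (mem_connectedComponentIn (connectedComponentIn_nonempty_iff.mp ⟨p, hpy⟩))

end Topology

section Metric

variable {X : Type*} [MetricSpace X] [MeasurableSpace X] [BorelSpace X]

theorem IsPreconnected.ofReal_sub_le_hausdorffMeasure_diff_closedBall {S : Set X}
    (hS : IsPreconnected S) {x₀ a b : X} {c : ℝ} (ha : a ∈ S) (hb : b ∈ S)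
    (hac : dist a x₀ ≤ c) : ENNReal.ofReal (dist b x₀ - c) ≤ μH[1] (S \ closedBall x₀ c) := by
  have hIoc : Ioc c (dist b x₀) ⊆ (dist · x₀) '' (S \ closedBall x₀ c) := by
    rintro t ⟨hct, htb⟩
    obtain ⟨q, hq, rfl⟩ := hS.intermediate_value ha hb
      (continuous_id.dist continuous_const).continuousOn ⟨hac.trans hct.le, htb⟩
    exact ⟨q, ⟨hq, by simpa using hct⟩, rfl⟩
  calc ENNReal.ofReal (dist b x₀ - c) = μH[1] (Ioc c (dist b x₀)) := by
        rw [hausdorffMeasure_real, Real.volume_Ioc]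
    _ ≤ μH[1] ((dist · x₀) '' (S \ closedBall x₀ c)) := measure_mono hIoc
    _ ≤ μH[1] (S \ closedBall x₀ c) := by
        simpa using (LipschitzWith.dist_left x₀).hausdorffMeasure_image_le zero_le_one _

theorem IsCompact.ofReal_sub_le_hausdorffMeasure_connectedComponentIn {Γ : Set X}
    (hΓ : IsCompact Γ) (hΓconn : IsConnected Γ) {x₀ y : X} {ρ : ℝ} (hy : y ∈ Γ)
    (hyρ : dist y x₀ ≤ ρ) (hΓρ : ¬ Γ ⊆ closedBall x₀ ρ) :
    ENNReal.ofReal (ρ - dist y x₀) ≤ μH[1] (connectedComponentIn (Γ ∩ closedBall x₀ ρ) y) := by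
  have hyC : y ∈ Γ ∩ closedBall x₀ ρ := ⟨hy, mem_closedBall.2 hyρ⟩
  obtain ⟨b, hbC, hb⟩ :=
    hΓ.connectedComponentIn_inter_frontier_nonempty hΓconn isClosed_closedBall hΓρ hyC
  have hbρ : dist b x₀ = ρ := frontier_closedBall_subset_sphere hb
  have := isPreconnected_connectedComponentIn.ofReal_sub_le_hausdorffMeasure_diff_closedBall
    (x₀ := x₀) (mem_connectedComponentIn hyC) hbC le_rfl
  rw [hbρ] at this
  exact this.trans (measure_mono sdiff_subset)

theorem IsPreconnected.subset_closedBall_of_hausdorffMeasure_le {Γ C : Set X}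
    (hΓ : IsPreconnected Γ) {x₀ y : X} {ρ : ℝ} (hyC : y ∈ C) (hCΓ : C ⊆ Γ)
    (hCρ : C ⊆ closedBall x₀ ρ) (hC : MeasurableSet C) (hCfin : μH[1] C ≠ ⊤)
    (hΓC : μH[1] Γ ≤ μH[1] C) : Γ ⊆ closedBall x₀ ρ := by
  intro w hw
  have hnull : μH[1] (Γ \ C) = 0 := by
    rw [measure_sdiff hCΓ hC.nullMeasurableSet hCfin, tsub_eq_zero_of_le hΓC]
  have hpos := (hΓ.ofReal_sub_le_hausdorffMeasure_diff_closedBall (hCΓ hyC) hw (hCρ hyC)).trans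
    (measure_mono (sdiff_subset_sdiff_right hCρ))
  rw [hnull, nonpos_iff_eq_zero, ENNReal.ofReal_eq_zero, sub_nonpos] at hpos
  exact mem_closedBall.2 hpos

theorem geodesic_subset_ball {K Γ : Set X} {x₀ y z : X} {r : ℝ} (hr : 0 < r)
    (hdens : μH[1] (K ∩ ball x₀ (3 * r)) ≤ ENNReal.ofReal (11 / 10 * (3 * r)))
    (hyr : dist y x₀ = r) (hzr : dist z x₀ = r) (hΓc : IsCompact Γ) (hΓconn : IsConnected Γ)
    (hΓK : Γ ⊆ K) (hyΓ : y ∈ Γ) (hzΓ : z ∈ Γ)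
    (hmin : ∀ Γ', IsCompact Γ' → IsConnected Γ' → Γ' ⊆ K → y ∈ Γ' → z ∈ Γ' →
      μH[1] Γ ≤ μH[1] Γ') :
    Γ ⊆ ball x₀ (3 * r) := by
  -- any radius `ρ < 3r` with `2 (ρ - r) > 33r/10` would do in place of `14r/5`
  suffices Γ ⊆ closedBall x₀ (14 / 5 * r) from this.trans (closedBall_subset_ball (by linarith))
  by_contra hΓB
  set B := Γ ∩ closedBall x₀ (14 / 5 * r)
  have hCK : ∀ p, connectedComponentIn B p ⊆ K ∩ ball x₀ (3 * r) := fun p q hq ↦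
    have hqB := connectedComponentIn_subset B p hq
    ⟨hΓK hqB.1, closedBall_subset_ball (by linarith) hqB.2⟩
  have hCcompact : ∀ p, IsCompact (connectedComponentIn B p) :=
    (hΓc.inter_right isClosed_closedBall).isCompact_connectedComponentIn
  by_cases hzC : z ∈ connectedComponentIn B y
  · have hyB : y ∈ B := ⟨hyΓ, mem_closedBall.2 (by linarith)⟩
    have hCΓ := (connectedComponentIn_subset B y).trans inter_subset_left
    exact hΓB (hΓconn.isPreconnected.subset_closedBall_of_hausdorffMeasure_le
      (mem_connectedComponentIn hyB) hCΓ
      ((connectedComponentIn_subset B y).trans inter_subset_right)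
      (hCcompact y).isClosed.measurableSet
      (ne_top_of_le_ne_top ENNReal.ofReal_ne_top ((measure_mono (hCK y)).trans hdens))
      (hmin _ (hCcompact y) (isConnected_connectedComponentIn_iff.2 hyB) (hCΓ.trans hΓK)
        (mem_connectedComponentIn hyB) hzC))
  · have hsum := calc
      ENNReal.ofReal (14 / 5 * r - dist y x₀) + ENNReal.ofReal (14 / 5 * r - dist z x₀)
        ≤ μH[1] (connectedComponentIn B y) + μH[1] (connectedComponentIn B z) := add_le_add
          (hΓc.ofReal_sub_le_hausdorffMeasure_connectedComponentIn hΓconn hyΓ (by linarith) hΓB)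
          (hΓc.ofReal_sub_le_hausdorffMeasure_connectedComponentIn hΓconn hzΓ (by linarith) hΓB)
      _ = μH[1] (connectedComponentIn B y ∪ connectedComponentIn B z) :=
          (measure_union (connectedComponentIn_disjoint hzC)
            (hCcompact z).isClosed.measurableSet).symm
      _ ≤ ENNReal.ofReal (11 / 10 * (3 * r)) :=
          (measure_mono (union_subset (hCK y) (hCK z))).trans hdens
    rw [hyr, hzr] at hsum
    rw [← ENNReal.ofReal_add (by linarith) (by linarith),
      ENNReal.ofReal_le_ofReal_iff (by positivity)] at hsum
    linarith

end Metric

theorem stmt5_general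
    (K Γ : Set (EuclideanSpace ℝ (Fin 2))) (x₀ : EuclideanSpace ℝ (Fin 2)) (r : ℝ)
    (hr : 0 < r)
    (hdens : μH[1] (K ∩ Metric.ball x₀ (3*r)) ≤ ENNReal.ofReal ((11/10) * (3*r)))
    (y z : EuclideanSpace ℝ (Fin 2))
    (hy : y ∈ K ∩ Metric.sphere x₀ r) (hz : z ∈ K ∩ Metric.sphere x₀ r)
    (hΓc : IsCompact Γ) (hΓconn : IsConnected Γ) (hΓK : Γ ⊆ K)
    (hyΓ : y ∈ Γ) (hzΓ : z ∈ Γ)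
    (hmin : ∀ Γ' : Set (EuclideanSpace ℝ (Fin 2)),
      IsCompact Γ' → IsConnected Γ' → Γ' ⊆ K → y ∈ Γ' → z ∈ Γ' →
      μH[1] Γ ≤ μH[1] Γ') :
    Γ ⊆ Metric.ball x₀ (3*r) ∧
    μH[1] Γ ≤ μH[1] (K ∩ Metric.ball x₀ (3*r)) ∧
    μH[1] Γ ≤ ENNReal.ofReal (4 * r) := by
  have hΓball := geodesic_subset_ball hr hdens hy.2 hz.2 hΓc hΓconn hΓK hyΓ hzΓ hmin
  have hΓ_le : μH[1] Γ ≤ μH[1] (K ∩ ball x₀ (3 * r)) := measure_mono (subset_inter hΓK hΓball)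
  exact ⟨hΓball, hΓ_le, hΓ_le.trans (hdens.trans (ENNReal.ofReal_le_ofReal (by linarith)))⟩

/-- If `K` is closed connected with `H¹(K ∩ B(x₀,3r)) ≤ (11/10)(3r)`, `y, z` lie on
`K ∩ ∂B(x₀,r)` and `Γ ⊆ K` is a geodesic (length-minimizing compact connected curve
in `K`) joining `y` and `z`, then `Γ ⊆ B(x₀,3r)` and consequently
`H¹(Γ) ≤ H¹(K ∩ B(x₀,3r)) ≤ 4r`. -/
theorem stmt5
    (K Γ : Set (EuclideanSpace ℝ (Fin 2))) (x₀ : EuclideanSpace ℝ (Fin 2)) (r : ℝ)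
    (hr : 0 < r) (hK : IsClosed K) (hKconn : IsConnected K)
    (hdens : μH[1] (K ∩ Metric.ball x₀ (3*r)) ≤ ENNReal.ofReal ((11/10) * (3*r)))
    (y z : EuclideanSpace ℝ (Fin 2))
    (hy : y ∈ K ∩ Metric.sphere x₀ r) (hz : z ∈ K ∩ Metric.sphere x₀ r)
    (hΓc : IsCompact Γ) (hΓconn : IsConnected Γ) (hΓK : Γ ⊆ K)
    (hyΓ : y ∈ Γ) (hzΓ : z ∈ Γ)
    (hmin : ∀ Γ' : Set (EuclideanSpace ℝ (Fin 2)),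
      IsCompact Γ' → IsConnected Γ' → Γ' ⊆ K → y ∈ Γ' → z ∈ Γ' →
      μH[1] Γ ≤ μH[1] Γ') :
    Γ ⊆ Metric.ball x₀ (3*r) ∧
    μH[1] Γ ≤ μH[1] (K ∩ Metric.ball x₀ (3*r)) ∧
    μH[1] Γ ≤ ENNReal.ofReal (4 * r) :=
  stmt5_general K Γ x₀ r hr hdens y z hy hz hΓc hΓconn hΓK hyΓ hzΓ hmin
end

section
/- (Gronwall-type lemma, version 2) Let α ∈ (0,1), C > 0, let N ∈ L¹(0,r₀) be nonnegative, and let E : (0,r₀] → [0,∞) be absolutely continuous and differentiable a.e., satisfying E(r) ≤ (r + C·r^{1+α})·E'(r) + C·N(r)·r² for a.e. r ∈ (0,r₀]. Then lim_{r→0⁺} E(r)/r exists and is finite. -/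
open MeasureTheory Set Filter intervalIntegral
open scoped Topology

/-!
`W(r) = (C r^α + 1)^{1/α} / r` solves `(r + C r^{1+α}) W' = -W`, so it is an integrating
factor: multiplying the inequality by `W / (r + C r^{1+α})` gives
`(E W)' ≥ -C N (C r^α + 1)^{1/α - 1}`, whose right-hand side is integrable near `0`. Hence
`E W + ∫₀^r C N (C t^α + 1)^{1/α - 1} dt` is nondecreasing and nonnegative on `(0, r₀]`, so it
converges as `r → 0⁺`; the integral tends to `0` and `r W(r) → 1`, so `E(r) / r` converges.
The product rule `(E W)' = E' W + E W'` is legitimate because `E` is absolutely continuous on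
every `[u, v] ⊆ (0, r₀]`.
-/

theorem AbsolutelyContinuousOnInterval.congr {f g : ℝ → ℝ} {a b : ℝ}
    (hf : AbsolutelyContinuousOnInterval f a b) (hfg : EqOn f g (uIcc a b)) :
    AbsolutelyContinuousOnInterval g a b := by
  refine hf.congr' (eventually_inf_principal.2 (Eventually.of_forall fun I hI => ?_))
  refine Finset.sum_congr rfl fun i hi => ?_
  rw [hfg (hI.1 i hi).1, hfg (hI.1 i hi).2]

section ForallSubEqIntegral

variable {E : ℝ → ℝ} {a b : ℝ}

theorem integrableOn_deriv_of_forall_sub_eq_integral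
    (h : ∀ s ∈ Icc a b, ∀ t ∈ Icc a b, s ≤ t → E t - E s = ∫ x in s..t, deriv E x) :
    IntegrableOn (deriv E) (Icc a b) := by
  refine LocallyIntegrableOn.integrableOn_isCompact (fun c hc => ?_) isCompact_Icc
  by_contra hbad
  -- An interval integral across `c` takes the junk value `0`, so `E` cannot change across `c`.
  have hconst : ∀ s ∈ Icc a b, ∀ t ∈ Icc a b, s ≤ t →
      Icc s t ∈ 𝓝[Icc a b] c → E s = E t := by
    intro s hs t ht hst hnhds
    have hni : ¬ IntervalIntegrable (deriv E) volume s t := fun hi =>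
      hbad ⟨Icc s t, hnhds, (intervalIntegrable_iff_integrableOn_Icc_of_le hst).1 hi⟩
    linarith [h s hs t ht hst, intervalIntegral.integral_undef hni]
  have hderiv : ∀ y ∈ Ioo a b, y ≠ c → deriv E y = 0 := by
    intro y hy hyc
    rcases hyc.lt_or_gt with hyc | hyc
    · have hloc : E =ᶠ[𝓝 y] fun _ => E b := by
        filter_upwards [Ioo_mem_nhds hy.1 hyc] with z hz
        refine hconst z ⟨hz.1.le, hz.2.le.trans hc.2⟩ b ⟨hc.1.trans hc.2, le_rfl⟩
          (hz.2.le.trans hc.2)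
          (mem_of_superset (inter_mem_nhdsWithin _ (Ioi_mem_nhds hz.2)) ?_)
        exact fun w hw => ⟨le_of_lt hw.2, hw.1.2⟩
      rw [hloc.deriv_eq, deriv_const]
    · have hloc : E =ᶠ[𝓝 y] fun _ => E a := by
        filter_upwards [Ioo_mem_nhds hyc hy.2] with z hz
        refine (hconst a ⟨le_rfl, hc.1.trans hc.2⟩ z ⟨hc.1.trans hz.1.le, hz.2.le⟩
          (hc.1.trans hz.1.le)
          (mem_of_superset (inter_mem_nhdsWithin _ (Iio_mem_nhds hz.1)) ?_)).symm
        exact fun w hw => ⟨hw.1.1, le_of_lt hw.2⟩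
      rw [hloc.deriv_eq, deriv_const]
  have hzero : deriv E =ᵐ[volume.restrict (Ioo a b)] 0 := by
    filter_upwards [ae_restrict_mem measurableSet_Ioo,
      ae_restrict_of_ae (compl_mem_ae_iff.2 (measure_singleton c))] with y hy hyc
    exact hderiv y hy hyc
  exact hbad ⟨Icc a b, self_mem_nhdsWithin, (integrableOn_Icc_iff_integrableOn_Ioo).2
    ((integrableOn_zero).congr_fun_ae hzero.symm)⟩

theorem absolutelyContinuousOnInterval_of_forall_sub_eq_integral (hab : a ≤ b)
    (h : ∀ s ∈ Icc a b, ∀ t ∈ Icc a b, s ≤ t → E t - E s = ∫ x in s..t, deriv E x) :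
    AbsolutelyContinuousOnInterval E a b := by
  have hint : IntervalIntegrable (deriv E) volume a b :=
    (intervalIntegrable_iff_integrableOn_Icc_of_le hab).2
      (integrableOn_deriv_of_forall_sub_eq_integral h)
  refine ((contDiffOn_const (c := E a)).absolutelyContinuousOnInterval.fun_add
      (hint.absolutelyContinuousOnInterval_intervalIntegral left_mem_uIcc)).congr
    fun x hx => ?_
  rw [uIcc_of_le hab] at hx
  linarith [h a ⟨le_rfl, hab⟩ x hx hx.1]

end ForallSubEqIntegral

theorem AbsolutelyContinuousOnInterval.intervalIntegral_le_mul_sub_mul {f g h : ℝ → ℝ}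
    {a b : ℝ} (hab : a ≤ b) (hf : AbsolutelyContinuousOnInterval f a b)
    (hg : AbsolutelyContinuousOnInterval g a b) (hh : IntervalIntegrable h volume a b)
    (hle : ∀ᵐ x ∂volume.restrict (Icc a b), h x ≤ deriv f x * g x + f x * deriv g x) :
    ∫ x in a..b, h x ≤ f b * g b - f a * g a := by
  rw [← hf.integral_deriv_mul_eq_sub hg]
  exact intervalIntegral.integral_mono_ae_restrict hab hh
    ((hf.intervalIntegrable_deriv.mul_continuousOn hg.continuousOn).add
      (hg.intervalIntegrable_deriv.continuousOn_mul hf.continuousOn)) hle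

theorem tendsto_intervalIntegral_nhdsGT {g : ℝ → ℝ} {a b : ℝ} (hab : a < b)
    (hg : IntervalIntegrable g volume a b) :
    Tendsto (fun r => ∫ x in a..r, g x) (𝓝[>] a) (𝓝 0) := by
  have hcont := continuousOn_primitive_interval' hg left_mem_uIcc a left_mem_uIcc
  rw [uIcc_of_le hab.le] at hcont
  simpa using hcont.tendsto.mono_left (nhdsWithin_le_of_mem (Icc_mem_nhdsGT hab))

noncomputable def gronwallFactor (α C x : ℝ) : ℝ := (C * x ^ α + 1) ^ (1 / α) / x

noncomputable def gronwallWeight (α C x : ℝ) : ℝ := (C * x ^ α + 1) ^ (1 / α - 1)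

section GronwallFactor

variable {α C x : ℝ}

theorem one_le_mul_rpow_add_one (hC : 0 ≤ C) (hx : 0 ≤ x) : 1 ≤ C * x ^ α + 1 := by
  have := Real.rpow_nonneg hx α
  nlinarith

theorem gronwallFactor_pos (hC : 0 ≤ C) (hx : 0 < x) : 0 < gronwallFactor α C x :=
  div_pos (Real.rpow_pos_of_pos (by linarith [one_le_mul_rpow_add_one (α := α) hC hx.le]) _) hx

theorem gronwallWeight_pos (hC : 0 ≤ C) (hx : 0 ≤ x) : 0 < gronwallWeight α C x :=
  Real.rpow_pos_of_pos (by linarith [one_le_mul_rpow_add_one (α := α) hC hx]) _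

theorem hasDerivAt_gronwallFactor (hα : 0 < α) (hC : 0 ≤ C) (hx : 0 < x) :
    HasDerivAt (gronwallFactor α C) (-(gronwallWeight α C x / x ^ 2)) x := by
  have hB : 0 < C * x ^ α + 1 := by linarith [one_le_mul_rpow_add_one (α := α) hC hx.le]
  have hpow : HasDerivAt (fun y => C * y ^ α + 1) (C * (α * x ^ (α - 1))) x :=
    ((Real.hasDerivAt_rpow_const (Or.inl hx.ne')).const_mul C).add_const 1
  refine ((hpow.rpow_const (p := 1 / α) (Or.inl hB.ne')).div (hasDerivAt_id x)
    hx.ne').congr_deriv ?_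
  simp only [gronwallWeight, id]
  rw [Real.rpow_sub hB, Real.rpow_sub hx, Real.rpow_one, Real.rpow_one]
  field_simp
  ring

theorem gronwallFactor_eq (hC : 0 ≤ C) (hx : 0 < x) :
    gronwallFactor α C x = (x + C * x ^ (1 + α)) * (gronwallWeight α C x / x ^ 2) := by
  have hB : 0 < C * x ^ α + 1 := by linarith [one_le_mul_rpow_add_one (α := α) hC hx.le]
  rw [gronwallFactor, gronwallWeight, Real.rpow_sub hB, Real.rpow_one, Real.rpow_add hx,
    Real.rpow_one]
  field_simp
  ring

theorem contDiffOn_gronwallFactor (hC : 0 ≤ C) : ContDiffOn ℝ 1 (gronwallFactor α C) (Ioi 0) :=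
  fun x (hx : 0 < x) => ContDiffAt.contDiffWithinAt <|
    (((contDiffAt_const.mul (Real.contDiffAt_rpow_const_of_ne hx.ne')).add
      contDiffAt_const).rpow_const_of_ne
      (by linarith [one_le_mul_rpow_add_one (α := α) hC hx.le])).div contDiffAt_id hx.ne'

theorem continuousOn_gronwallWeight (hα : 0 < α) (hC : 0 ≤ C) :
    ContinuousOn (gronwallWeight α C) (Ici 0) := by
  have hbase : ContinuousOn (fun x : ℝ => C * x ^ α + 1) (Ici 0) :=
    (continuous_const.mul (Real.continuous_rpow_const hα.le)).add continuous_const |>.continuousOn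
  exact hbase.rpow_const fun x (hx : 0 ≤ x) =>
    Or.inl (by linarith [one_le_mul_rpow_add_one (α := α) hC hx])

theorem tendsto_mul_gronwallFactor (hα : 0 < α) (C : ℝ) :
    Tendsto (fun r => r * gronwallFactor α C r) (𝓝[>] 0) (𝓝 1) := by
  have hcont : ContinuousAt (fun r : ℝ => (C * r ^ α + 1) ^ (1 / α)) 0 :=
    ((continuousAt_const.mul (Real.continuousAt_rpow_const 0 α (Or.inr hα.le))).add
      continuousAt_const).rpow_const (Or.inl (by simp [Real.zero_rpow hα.ne']))
  have hlim := hcont.tendsto.mono_left (nhdsWithin_le_nhds (s := Ioi 0))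
  rw [Real.zero_rpow hα.ne', mul_zero, zero_add, Real.one_rpow] at hlim
  refine hlim.congr' ?_
  filter_upwards [self_mem_nhdsWithin] with r (hr : 0 < r)
  rw [gronwallFactor, mul_div_cancel₀ _ hr.ne']

theorem neg_mul_gronwallWeight_le {e e' n : ℝ} (hC : 0 ≤ C) (hx : 0 < x)
    (h : e ≤ (x + C * x ^ (1 + α)) * e' + C * n * x ^ 2) :
    -(C * n * gronwallWeight α C x) ≤
      e' * gronwallFactor α C x + e * -(gronwallWeight α C x / x ^ 2) := by
  have hP : 0 ≤ gronwallWeight α C x / x ^ 2 := by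
    have := gronwallWeight_pos (α := α) hC hx.le
    positivity
  have key : gronwallWeight α C x / x ^ 2 * -(C * n * x ^ 2) ≤
      gronwallWeight α C x / x ^ 2 * ((x + C * x ^ (1 + α)) * e' - e) :=
    mul_le_mul_of_nonneg_left (by linarith) hP
  calc -(C * n * gronwallWeight α C x)
      _ = gronwallWeight α C x / x ^ 2 * -(C * n * x ^ 2) := by field_simp
      _ ≤ gronwallWeight α C x / x ^ 2 * ((x + C * x ^ (1 + α)) * e' - e) := key
      _ = e' * gronwallFactor α C x + e * -(gronwallWeight α C x / x ^ 2) := by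
        rw [gronwallFactor_eq hC hx]; ring

end GronwallFactor

theorem monotoneOn_mul_gronwallFactor_add_integral {α C r₀ : ℝ} {N E : ℝ → ℝ} (hα : 0 < α)
    (hC : 0 ≤ C) (hg : IntegrableOn (fun x => C * N x * gronwallWeight α C x) (Ioc 0 r₀))
    (hAC : ∀ s ∈ Ioc 0 r₀, ∀ t ∈ Ioc 0 r₀, s ≤ t → E t - E s = ∫ x in s..t, deriv E x)
    (hineq : ∀ᵐ r ∂(volume.restrict (Ioc 0 r₀)),
      E r ≤ (r + C * r ^ (1 + α)) * deriv E r + C * N r * r ^ 2) :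
    MonotoneOn
      (fun r => E r * gronwallFactor α C r + ∫ x in 0..r, C * N x * gronwallWeight α C x)
      (Ioc 0 r₀) := by
  intro u hu v hv huv
  have hsub : Icc u v ⊆ Ioc 0 r₀ := Icc_subset_Ioc hu.1 hv.2
  have hEac : AbsolutelyContinuousOnInterval E u v :=
    absolutelyContinuousOnInterval_of_forall_sub_eq_integral huv fun s hs t ht =>
      hAC s (hsub hs) t (hsub ht)
  have hWac : AbsolutelyContinuousOnInterval (gronwallFactor α C) u v :=
    ((contDiffOn_gronwallFactor hC).mono fun x hx =>
      hu.1.trans_le (uIcc_of_le huv ▸ hx).1).absolutelyContinuousOnInterval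
  have hgint : ∀ a b, 0 ≤ a → a ≤ b → b ≤ r₀ →
      IntervalIntegrable (fun x => C * N x * gronwallWeight α C x) volume a b :=
    fun a b ha hab hb =>
      (intervalIntegrable_iff_integrableOn_Ioc_of_le hab).2 (hg.mono_set (Ioc_subset_Ioc ha hb))
  have hincr := hEac.intervalIntegral_le_mul_sub_mul
    (h := fun x => -(C * N x * gronwallWeight α C x)) huv hWac
    (hgint u v hu.1.le huv hv.2).neg <| by
      filter_upwards [ae_restrict_of_ae_restrict_of_subset hsub hineq,
        ae_restrict_mem measurableSet_Icc] with x hx hxuv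
      have hx0 : 0 < x := (hsub hxuv).1
      rw [(hasDerivAt_gronwallFactor hα hC hx0).deriv]
      exact neg_mul_gronwallWeight_le hC hx0 hx
  rw [intervalIntegral.integral_neg] at hincr
  have hsplit := integral_add_adjacent_intervals (hgint 0 u le_rfl hu.1.le (huv.trans hv.2))
    (hgint u v hu.1.le huv hv.2)
  dsimp only
  linarith

/-- (Gronwall-type lemma, version 2.) If `E : (0,r₀] → [0,∞)` is absolutely
continuous and satisfies `E(r) ≤ (r + C r^{1+α}) E'(r) + C N(r) r²` a.e., with
`α ∈ (0,1)`, `C > 0` and `N ∈ L¹(0,r₀)` nonnegative, then `lim_{r→0⁺} E(r)/r`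
exists and is finite. -/
theorem stmt11
    (α C r₀ : ℝ) (hα : α ∈ Set.Ioo (0:ℝ) 1) (hC : 0 < C) (hr₀ : 0 < r₀)
    (N : ℝ → ℝ) (hNpos : ∀ r ∈ Set.Ioo 0 r₀, 0 ≤ N r)
    (hNint : MeasureTheory.IntegrableOn N (Set.Ioo 0 r₀) volume)
    (E : ℝ → ℝ)
    (hnonneg : ∀ r ∈ Set.Ioc 0 r₀, 0 ≤ E r)
    (hAC : ∀ s ∈ Set.Ioc 0 r₀, ∀ t ∈ Set.Ioc 0 r₀, s ≤ t →
      E t - E s = ∫ x in s..t, deriv E x)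
    (hineq : ∀ᵐ r ∂(volume.restrict (Set.Ioc 0 r₀)),
      E r ≤ (r + C * r ^ (1 + α)) * deriv E r + C * N r * r ^ 2) :
    ∃ l : ℝ, Tendsto (fun r => E r / r) (𝓝[>] (0:ℝ)) (𝓝 l) := by
  set g := fun x => C * N x * gronwallWeight α C x
  have hg : IntegrableOn g (Icc 0 r₀) :=
    IntegrableOn.congr_fun
      ((((integrableOn_Icc_iff_integrableOn_Ioo).2 hNint).mul_continuousOn
        ((continuousOn_gronwallWeight hα.1 hC.le).mono Icc_subset_Ici_self)
        isCompact_Icc).const_mul C)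
      (fun x _ => (mul_assoc _ _ _).symm) measurableSet_Icc
  set ψ := fun r => E r * gronwallFactor α C r + ∫ x in 0..r, g x
  have hψ : MonotoneOn ψ (Ioc 0 r₀) :=
    monotoneOn_mul_gronwallFactor_add_integral hα.1 hC.le (hg.mono_set Ioc_subset_Icc_self)
      hAC hineq
  have hψ_nonneg : ∀ r ∈ Ioo 0 r₀, 0 ≤ ψ r := by
    intro r hr
    refine add_nonneg (mul_nonneg (hnonneg r (Ioo_subset_Ioc_self hr))
      (gronwallFactor_pos hC.le hr.1).le) ?_
    rw [intervalIntegral.integral_of_le hr.1.le]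
    exact setIntegral_nonneg measurableSet_Ioc fun x hx =>
      mul_nonneg (mul_nonneg hC.le (hNpos x ⟨hx.1, hx.2.trans_lt hr.2⟩))
        (gronwallWeight_pos hC.le hx.1.le).le
  obtain ⟨L, hL⟩ : ∃ L, Tendsto ψ (𝓝[>] 0) (𝓝 L) :=
    ⟨_, (hψ.mono Ioo_subset_Ioc_self).tendsto_nhdsWithin_Ioo_right (nonempty_Ioo.2 hr₀)
      ⟨0, forall_mem_image.2 hψ_nonneg⟩⟩
  have hG := tendsto_intervalIntegral_nhdsGT hr₀
    ((intervalIntegrable_iff_integrableOn_Icc_of_le hr₀.le).2 hg)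
  have hEW : Tendsto (fun r => E r * gronwallFactor α C r) (𝓝[>] 0) (𝓝 L) := by
    simpa [ψ] using hL.sub hG
  refine ⟨L,
    (div_one L ▸ hEW.div (tendsto_mul_gronwallFactor hα.1 C) one_ne_zero).congr' ?_⟩
  filter_upwards [self_mem_nhdsWithin] with r (hr : 0 < r)
  rw [Pi.div_apply, mul_div_mul_right _ _ (gronwallFactor_pos hC.le hr).ne']
end
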